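/- For every μ > μ_ℝ, the critical NLS energy is unbounded from below on the line at mass μ: for every M > 0 there exists a continuously differentiable u : ℝ → ℝ with u and its derivative u' square-integrable, ∫_ℝ u(x)² dx = μ, and E_6(u, ℝ) < −M. -/

import Mathlib

/-!
The exponent 6 is `L²`-critical: the rescaling `u ↦ √b · u (b ·)` preserves the mass `∫ u²` and
multiplies both terms of the energy by `b²`. So one state of mass `μ` with negative energy yields
states of mass `μ` with arbitrarily negative energy as `b → ∞`. The soliton profile `a / √cosh`
with `a² = μ / π` is such a state: by `∫ sech = π` and `∫ sech³ = π / 2` its energy is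
`π (a² / 16 - a⁶ / 12)`, negative exactly when `μ > √3 π / 2`.
-/

open MeasureTheory Set Filter Real Topology

theorem integrable_deriv_of_nonneg {g g' : ℝ → ℝ} {m n : ℝ}
    (hderiv : ∀ x, HasDerivAt g (g' x) x) (g'pos : ∀ x, 0 ≤ g' x)
    (hbot : Tendsto g atBot (𝓝 m)) (htop : Tendsto g atTop (𝓝 n)) : Integrable g' := by
  have hIoi : IntegrableOn g' (Ioi 0) :=
    integrableOn_Ioi_deriv_of_nonneg' (fun x _ => hderiv x) (fun x _ => g'pos x) htop
  have hIic : IntegrableOn g' (Iic 0) := by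
    have hneg : IntegrableOn (g' ∘ Neg.neg) (Ioi 0) := by
      refine integrableOn_Ioi_deriv_of_nonneg' (g := fun x => -g (-x)) (fun x _ => ?_)
        (fun x _ => g'pos _) (hbot.comp tendsto_neg_atTop_atBot).neg
      simpa using ((hderiv (-x)).scomp x (hasDerivAt_neg' x)).fun_neg
    rw [integrableOn_Iic_iff_integrableOn_Iio]
    exact ((Measure.measurePreserving_neg volume).integrableOn_comp_preimage
      (Homeomorph.neg ℝ).measurableEmbedding).1 (by simpa using hneg)
  rw [← integrableOn_univ, ← Iic_union_Ioi (a := 0)]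
  exact hIic.union hIoi

theorem integral_mul_comp_mul_left (c : ℝ) (g : ℝ → ℝ) {b : ℝ} (hb : 0 < b) :
    ∫ x, c * g (b * x) = c / b * ∫ x, g x := by
  rw [integral_const_mul, Measure.integral_comp_mul_left, abs_of_pos (inv_pos.2 hb), smul_eq_mul,
    div_eq_mul_inv, mul_assoc]

theorem abs_sinh_lt_cosh (x : ℝ) : |sinh x| < cosh x := by
  rw [abs_sinh, ← cosh_abs]
  exact sinh_lt_cosh _

theorem hasDerivAt_two_mul_arctan_exp (x : ℝ) :
    HasDerivAt (fun x => 2 * arctan (exp x)) (cosh x)⁻¹ x := by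
  refine (((hasDerivAt_exp x).arctan).const_mul 2).congr_deriv ?_
  rw [cosh_eq, exp_neg]
  field_simp
  ring

theorem tendsto_two_mul_arctan_exp_atBot :
    Tendsto (fun x => 2 * arctan (exp x)) atBot (𝓝 0) := by
  simpa using (continuous_arctan.tendsto 0 |>.comp tendsto_exp_atBot).const_mul 2

theorem tendsto_two_mul_arctan_exp_atTop :
    Tendsto (fun x => 2 * arctan (exp x)) atTop (𝓝 π) := by
  simpa [mul_div_cancel₀] using
    ((tendsto_arctan_atTop.mono_right nhdsWithin_le_nhds).comp tendsto_exp_atTop).const_mul 2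

theorem integrable_cosh_inv : Integrable fun x => (cosh x)⁻¹ :=
  integrable_deriv_of_nonneg hasDerivAt_two_mul_arctan_exp (fun x => (inv_pos.2 (cosh_pos x)).le)
    tendsto_two_mul_arctan_exp_atBot tendsto_two_mul_arctan_exp_atTop

theorem integral_cosh_inv : ∫ x, (cosh x)⁻¹ = π := by
  rw [integral_of_hasDerivAt_of_tendsto hasDerivAt_two_mul_arctan_exp integrable_cosh_inv
    tendsto_two_mul_arctan_exp_atBot tendsto_two_mul_arctan_exp_atTop, sub_zero]

theorem integrable_cosh_pow_three_inv : Integrable fun x => (cosh x ^ 3)⁻¹ := by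
  refine integrable_cosh_inv.mono' (by fun_prop) (.of_forall fun x => ?_)
  rw [norm_inv, norm_pow, norm_of_nonneg (cosh_pos x).le]
  gcongr
  exact le_self_pow₀ (one_le_cosh x) (by norm_num)

theorem hasDerivAt_sinh_div_cosh_sq (x : ℝ) :
    HasDerivAt (fun x => sinh x / cosh x ^ 2) (2 * (cosh x ^ 3)⁻¹ - (cosh x)⁻¹) x := by
  have hc := (cosh_pos x).ne'
  refine ((hasDerivAt_sinh x).div ((hasDerivAt_cosh x).fun_pow 2) (pow_ne_zero 2 hc)).congr_deriv ?_
  field_simp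
  rw [sinh_sq]
  ring

theorem integrable_sinh_div_cosh_sq : Integrable fun x => sinh x / cosh x ^ 2 := by
  have hmeas : Continuous fun x => sinh x / cosh x ^ 2 :=
    continuous_sinh.div (continuous_cosh.pow 2) fun x => (pow_pos (cosh_pos x) 2).ne'
  refine integrable_cosh_inv.mono' hmeas.aestronglyMeasurable (.of_forall fun x => ?_)
  have hc := cosh_pos x
  rw [norm_div, norm_pow, norm_of_nonneg hc.le, Real.norm_eq_abs, div_le_iff₀ (by positivity)]
  calc |sinh x| ≤ cosh x := (abs_sinh_lt_cosh x).le
    _ = (cosh x)⁻¹ * cosh x ^ 2 := by field_simp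

theorem integral_cosh_pow_three_inv : ∫ x, (cosh x ^ 3)⁻¹ = π / 2 := by
  have h := integral_eq_zero_of_hasDerivAt_of_integrable hasDerivAt_sinh_div_cosh_sq
    ((integrable_cosh_pow_three_inv.const_mul 2).sub integrable_cosh_inv)
    integrable_sinh_div_cosh_sq
  rw [integral_sub (integrable_cosh_pow_three_inv.const_mul 2) integrable_cosh_inv,
    integral_const_mul, integral_cosh_inv] at h
  linarith

noncomputable def criticalEnergy (u u' : ℝ → ℝ) : ℝ :=
  (1 / 2) * (∫ x, u' x ^ 2) - (1 / 6) * (∫ x, |u x| ^ 6)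

/-- `u ∈ H¹_μ(ℝ)`, witnessed by a continuous classical derivative `u'`. -/
structure IsAdmissible (μ : ℝ) (u u' : ℝ → ℝ) : Prop where
  hasDerivAt : ∀ x, HasDerivAt u (u' x) x
  continuous_deriv : Continuous u'
  integrable_sq : Integrable fun x => u x ^ 2
  integrable_deriv_sq : Integrable fun x => u' x ^ 2
  integral_sq : ∫ x, u x ^ 2 = μ

section Rescaling

variable {b : ℝ} (hb : 0 < b) {μ : ℝ} {u u' : ℝ → ℝ}
include hb

theorem sqrt_mul_comp_mul_sq (x : ℝ) : (√b * u (b * x)) ^ 2 = b * u (b * x) ^ 2 := by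
  rw [mul_pow, sq_sqrt hb.le]

theorem mul_sqrt_mul_comp_mul_sq (x : ℝ) :
    (b * √b * u' (b * x)) ^ 2 = b ^ 3 * u' (b * x) ^ 2 := by
  rw [mul_pow, mul_pow, sq_sqrt hb.le]
  ring

theorem abs_sqrt_mul_comp_mul_pow_six (x : ℝ) :
    |√b * u (b * x)| ^ 6 = b ^ 3 * |u (b * x)| ^ 6 := by
  rw [show 6 = 2 * 3 by rfl, pow_mul, pow_mul, sq_abs, sq_abs, sqrt_mul_comp_mul_sq hb, mul_pow]

theorem IsAdmissible.rescale (hu : IsAdmissible μ u u') :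
    IsAdmissible μ (fun x => √b * u (b * x)) (fun x => b * √b * u' (b * x)) where
  hasDerivAt x := by
    have h := ((hu.hasDerivAt (b * x)).comp x ((hasDerivAt_id x).const_mul b)).const_mul √b
    simp only [Function.comp_def, mul_one] at h
    exact h.congr_deriv (by ring)
  continuous_deriv := by
    have := hu.continuous_deriv
    fun_prop
  integrable_sq := by
    simp_rw [sqrt_mul_comp_mul_sq hb]
    exact (hu.integrable_sq.comp_mul_left' hb.ne').const_mul b
  integrable_deriv_sq := by
    simp_rw [mul_sqrt_mul_comp_mul_sq hb]
    exact (hu.integrable_deriv_sq.comp_mul_left' hb.ne').const_mul _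
  integral_sq := by
    rw [← hu.integral_sq]
    simp_rw [sqrt_mul_comp_mul_sq hb]
    rw [integral_mul_comp_mul_left _ (fun x => u x ^ 2) hb, div_self hb.ne', one_mul]

theorem criticalEnergy_rescale :
    criticalEnergy (fun x => √b * u (b * x)) (fun x => b * √b * u' (b * x)) =
      b ^ 2 * criticalEnergy u u' := by
  simp_rw [criticalEnergy, mul_sqrt_mul_comp_mul_sq hb, abs_sqrt_mul_comp_mul_pow_six hb]
  rw [integral_mul_comp_mul_left _ (fun x => u' x ^ 2) hb,
    integral_mul_comp_mul_left _ (fun x => |u x| ^ 6) hb]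
  field_simp

end Rescaling

section Soliton

variable (a : ℝ)

theorem hasDerivAt_div_sqrt_cosh (x : ℝ) :
    HasDerivAt (fun x => a / √(cosh x)) (-(a / 2) * sinh x / √(cosh x) ^ 3) x := by
  have hs : √(cosh x) ≠ 0 := (sqrt_pos.2 (cosh_pos x)).ne'
  refine ((hasDerivAt_const x a).div ((hasDerivAt_cosh x).sqrt (cosh_pos x).ne') hs).congr_deriv ?_
  field_simp
  ring

theorem div_sqrt_cosh_sq (x : ℝ) : (a / √(cosh x)) ^ 2 = a ^ 2 * (cosh x)⁻¹ := by
  rw [div_pow, sq_sqrt (cosh_pos x).le, div_eq_mul_inv]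

theorem abs_div_sqrt_cosh_pow_six (x : ℝ) :
    |a / √(cosh x)| ^ 6 = a ^ 6 * (cosh x ^ 3)⁻¹ := by
  rw [show 6 = 2 * 3 by rfl, pow_mul, sq_abs, div_sqrt_cosh_sq, mul_pow, inv_pow, ← pow_mul]

theorem deriv_div_sqrt_cosh_sq (x : ℝ) :
    (-(a / 2) * sinh x / √(cosh x) ^ 3) ^ 2 = a ^ 2 / 4 * ((cosh x)⁻¹ - (cosh x ^ 3)⁻¹) := by
  rw [div_pow, ← pow_mul, show 3 * 2 = 2 * 3 by rfl, pow_mul, sq_sqrt (cosh_pos x).le, mul_pow,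
    sinh_sq]
  field_simp
  ring

theorem isAdmissible_div_sqrt_cosh :
    IsAdmissible (a ^ 2 * π) (fun x => a / √(cosh x))
      (fun x => -(a / 2) * sinh x / √(cosh x) ^ 3) where
  hasDerivAt := hasDerivAt_div_sqrt_cosh a
  continuous_deriv := by
    refine Continuous.div (by fun_prop) (by fun_prop) fun x => ?_
    exact pow_ne_zero 3 (sqrt_pos.2 (cosh_pos x)).ne'
  integrable_sq := by
    simpa only [div_sqrt_cosh_sq] using integrable_cosh_inv.const_mul (a ^ 2)
  integrable_deriv_sq := by
    simp_rw [deriv_div_sqrt_cosh_sq]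
    exact (integrable_cosh_inv.sub integrable_cosh_pow_three_inv).const_mul _
  integral_sq := by
    simp only [div_sqrt_cosh_sq, integral_const_mul, integral_cosh_inv]

theorem criticalEnergy_div_sqrt_cosh :
    criticalEnergy (fun x => a / √(cosh x)) (fun x => -(a / 2) * sinh x / √(cosh x) ^ 3) =
      π * (a ^ 2 / 16 - a ^ 6 / 12) := by
  simp only [criticalEnergy, abs_div_sqrt_cosh_pow_six, deriv_div_sqrt_cosh_sq, integral_const_mul,
    integral_sub integrable_cosh_inv integrable_cosh_pow_three_inv, integral_cosh_inv,
    integral_cosh_pow_three_inv]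
  ring

end Soliton

theorem exists_isAdmissible_criticalEnergy_lt {μ : ℝ} {u u' : ℝ → ℝ} (hu : IsAdmissible μ u u')
    (hneg : criticalEnergy u u' < 0) (M : ℝ) :
    ∃ v v', IsAdmissible μ v v' ∧ criticalEnergy v v' < -M := by
  set E := criticalEnergy u u'
  obtain ⟨b, hb1, hbM⟩ : ∃ b, 1 ≤ b ∧ M < b * -E :=
    ⟨max 1 (M / -E + 1), le_max_left _ _,
      (div_lt_iff₀ (neg_pos.2 hneg)).1 (lt_max_of_lt_right (lt_add_one _))⟩
  have hb : 0 < b := by linarith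
  refine ⟨_, _, hu.rescale hb, ?_⟩
  rw [criticalEnergy_rescale hb]
  calc b ^ 2 * E ≤ b * E := by nlinarith [mul_le_mul_of_nonneg_left hb1 hb.le]
    _ < -M := by linarith

theorem exists_isAdmissible_criticalEnergy_neg {μ : ℝ} (hμ : √3 * π / 2 < μ) :
    ∃ u u', IsAdmissible μ u u' ∧ criticalEnergy u u' < 0 := by
  set a := √(μ / π)
  have hμ0 : 0 < μ := lt_trans (by positivity) hμ
  have ha : a ^ 2 = μ / π := sq_sqrt (by positivity)
  have hmass : a ^ 2 * π = μ := by rw [ha]; field_simp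
  refine ⟨_, _, hmass ▸ isAdmissible_div_sqrt_cosh a, ?_⟩
  rw [criticalEnergy_div_sqrt_cosh]
  have h3 : √3 ^ 2 = 3 := sq_sqrt (by norm_num)
  have hcrit : 3 / 4 < (a ^ 2) ^ 2 := by
    have := pow_lt_pow_left₀ hμ (by positivity) two_ne_zero
    rw [div_pow, mul_pow, h3] at this
    rw [ha, div_pow, lt_div_iff₀ (by positivity)]
    linarith
  have ha2 : 0 < a ^ 2 := by rw [ha]; positivity
  nlinarith [pi_pos]

/-- For every `μ > μ_ℝ = √3 π / 2`, the critical NLS energy is unbounded from below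
on the line at mass `μ`: for every `M > 0` there is a continuously differentiable `u`
with `u, u'` square-integrable, `∫ u² = μ` and `E_6(u,ℝ) < −M`. -/
theorem critical_energy_unbounded_below_line
    (μ : ℝ) (hμ : Real.sqrt 3 * Real.pi / 2 < μ) :
    ∀ M : ℝ, 0 < M → ∃ u u' : ℝ → ℝ,
      (∀ x, HasDerivAt u (u' x) x) ∧ Continuous u' ∧
      Integrable (fun x => u x ^ 2) ∧ Integrable (fun x => u' x ^ 2) ∧
      (∫ x, u x ^ 2) = μ ∧
      (1 / 2) * (∫ x, u' x ^ 2) - (1 / 6) * (∫ x, |u x| ^ 6) < -M := by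
  intro M _
  obtain ⟨u, u', hu, hneg⟩ := exists_isAdmissible_criticalEnergy_neg hμ
  obtain ⟨v, v', hv, hE⟩ := exists_isAdmissible_criticalEnergy_lt hu hneg M
  exact ⟨v, v', hv.hasDerivAt, hv.continuous_deriv, hv.integrable_sq, hv.integrable_deriv_sq,
    hv.integral_sq, hE⟩
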